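/- Let F, G, U : ℝ² → ℝ be smooth (C^∞) with U nonvanishing, let y : ℝ² → ℝ be smooth with ∂₁y(x,h) = F(x, y(x,h)) and ∂₂y(x,h) = (U(x, y(x,h)))⁻¹ for all (x,h) in an open set D, and let I : ℝ² → ℝ be smooth with ∂₁I(x,h) = G(x, y(x,h)) on D. Then for every j ∈ ℕ and all (x,h) ∈ D, ∂₁[ ∂₂^j I ](x,h) = (D_h^{∘j} G)(x, y(x,h)), where ∂₂^j I denotes the j-th iterated partial derivative of I in the second variable and D_h^{∘j} G denotes the j-fold application of the operator D_h to G. -/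

import Mathlib

noncomputable section

/-- Partial derivative with respect to the first variable. -/
def pd1 (f : ℝ × ℝ → ℝ) (p : ℝ × ℝ) : ℝ := deriv (fun t => f (t, p.2)) p.1

/-- Partial derivative with respect to the second variable. -/
def pd2 (f : ℝ × ℝ → ℝ) (p : ℝ × ℝ) : ℝ := deriv (fun t => f (p.1, t)) p.2

/-- The operator `D_x g = ∂₁ g + F · ∂₂ g`. -/
def Dx (F : ℝ × ℝ → ℝ) (g : ℝ × ℝ → ℝ) (p : ℝ × ℝ) : ℝ := pd1 g p + F p * pd2 g p

/-- The operator `D_h g = U⁻¹ · ∂₂ g`. -/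
def Dh (U : ℝ × ℝ → ℝ) (g : ℝ × ℝ → ℝ) (p : ℝ × ℝ) : ℝ := (U p)⁻¹ * pd2 g p

lemma hasDerivAt_pd1 {f : ℝ × ℝ → ℝ} {p : ℝ × ℝ} (hf : DifferentiableAt ℝ f p) :
    HasDerivAt (fun t => f (t, p.2)) (fderiv ℝ f p ((1 : ℝ), (0 : ℝ))) p.1 := by
  have h1 : HasDerivAt (fun t : ℝ => (t, p.2)) ((1 : ℝ), (0 : ℝ)) p.1 :=
    (hasDerivAt_id p.1).prodMk (hasDerivAt_const p.1 p.2)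
  have := hf.hasFDerivAt.comp_hasDerivAt p.1 (by simpa using h1)
  exact this

lemma hasDerivAt_pd2 {f : ℝ × ℝ → ℝ} {p : ℝ × ℝ} (hf : DifferentiableAt ℝ f p) :
    HasDerivAt (fun t => f (p.1, t)) (fderiv ℝ f p ((0 : ℝ), (1 : ℝ))) p.2 := by
  have h1 : HasDerivAt (fun t : ℝ => (p.1, t)) ((0 : ℝ), (1 : ℝ)) p.2 :=
    (hasDerivAt_const p.2 p.1).prodMk (hasDerivAt_id p.2)
  have := hf.hasFDerivAt.comp_hasDerivAt p.2 (by simpa using h1)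
  exact this

lemma pd1_eq_fderiv {f : ℝ × ℝ → ℝ} {p : ℝ × ℝ} (hf : DifferentiableAt ℝ f p) :
    pd1 f p = fderiv ℝ f p ((1 : ℝ), (0 : ℝ)) := (hasDerivAt_pd1 hf).deriv

lemma pd2_eq_fderiv {f : ℝ × ℝ → ℝ} {p : ℝ × ℝ} (hf : DifferentiableAt ℝ f p) :
    pd2 f p = fderiv ℝ f p ((0 : ℝ), (1 : ℝ)) := (hasDerivAt_pd2 hf).deriv

lemma contDiff_pd1 {f : ℝ × ℝ → ℝ} (hf : ContDiff ℝ (⊤ : ℕ∞) f) : ContDiff ℝ (⊤ : ℕ∞) (pd1 f) := by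
  have : pd1 f = fun p => fderiv ℝ f p ((1 : ℝ), (0 : ℝ)) := by
    funext p; exact pd1_eq_fderiv (hf.differentiable (by simp) p)
  rw [this]
  exact (hf.fderiv_right (by simp)).clm_apply contDiff_const

lemma contDiff_pd2 {f : ℝ × ℝ → ℝ} (hf : ContDiff ℝ (⊤ : ℕ∞) f) : ContDiff ℝ (⊤ : ℕ∞) (pd2 f) := by
  have : pd2 f = fun p => fderiv ℝ f p ((0 : ℝ), (1 : ℝ)) := by
    funext p; exact pd2_eq_fderiv (hf.differentiable (by simp) p)
  rw [this]
  exact (hf.fderiv_right (by simp)).clm_apply contDiff_const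

lemma contDiff_pd2_iter {f : ℝ × ℝ → ℝ} (hf : ContDiff ℝ (⊤ : ℕ∞) f) (j : ℕ) :
    ContDiff ℝ (⊤ : ℕ∞) (pd2^[j] f) := by
  induction j with
  | zero => exact hf
  | succ j ih => rw [Function.iterate_succ_apply']; exact contDiff_pd2 ih

/-- Clairaut's theorem for `pd1`/`pd2` of a smooth function. -/
lemma pd1_pd2_comm {f : ℝ × ℝ → ℝ} (hf : ContDiff ℝ (⊤ : ℕ∞) f) (p : ℝ × ℝ) :
    pd1 (pd2 f) p = pd2 (pd1 f) p := by
  have hd : Differentiable ℝ f := hf.differentiable (by simp)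
  have hfd : Differentiable ℝ (fderiv ℝ f) :=
    (hf.fderiv_right (m := (⊤ : ℕ∞)) (by simp)).differentiable (by simp)
  have h2 : pd2 f = fun q => fderiv ℝ f q ((0 : ℝ), (1 : ℝ)) := by
    funext q; exact pd2_eq_fderiv (hd q)
  have h1 : pd1 f = fun q => fderiv ℝ f q ((1 : ℝ), (0 : ℝ)) := by
    funext q; exact pd1_eq_fderiv (hd q)
  have hsym : IsSymmSndFDerivAt ℝ f p :=
    hf.contDiffAt.isSymmSndFDerivAt (by rw [minSmoothness_of_isRCLikeNormedField]; exact WithTop.coe_le_coe.mpr (le_top : (2 : ℕ∞) ≤ ⊤))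
  have e2 : ∀ v : ℝ × ℝ,
      fderiv ℝ (fun q => fderiv ℝ f q v) p = (fderiv ℝ (fderiv ℝ f) p).flip v := by
    intro v
    have := fderiv_clm_apply (c := fderiv ℝ f) (u := fun _ => v) (hfd p)
      (differentiableAt_const v)
    simpa using this
  have d2 : DifferentiableAt ℝ (pd2 f) p := (contDiff_pd2 hf).differentiable (by simp) p
  have d1 : DifferentiableAt ℝ (pd1 f) p := (contDiff_pd1 hf).differentiable (by simp) p
  rw [pd1_eq_fderiv d2, pd2_eq_fderiv d1, h1, h2, e2, e2]
  simpa using hsym ((1 : ℝ), (0 : ℝ)) ((0 : ℝ), (1 : ℝ))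

/-- Chain rule for `pd2` of `q ↦ g (q.1, y q)`. -/
lemma pd2_comp {g y : ℝ × ℝ → ℝ} (hg : ContDiff ℝ (⊤ : ℕ∞) g) (hy : ContDiff ℝ (⊤ : ℕ∞) y)
    (p : ℝ × ℝ) :
    pd2 (fun q => g (q.1, y q)) p = pd2 g (p.1, y p) * pd2 y p := by
  have hφ : HasDerivAt (fun t => y (p.1, t)) (pd2 y p) p.2 := by
    have := hasDerivAt_pd2 (hy.differentiable (by simp) p)
    rwa [← pd2_eq_fderiv (hy.differentiable (by simp) p)] at this
  have hψ : HasDerivAt (fun s => g (p.1, s)) (pd2 g (p.1, y p)) (y (p.1, p.2)) := by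
    have := hasDerivAt_pd2 (f := g) (p := (p.1, y p)) (hg.differentiable (by simp) _)
    rw [← pd2_eq_fderiv (hg.differentiable (by simp) _)] at this
    simpa using this
  have := hψ.comp p.2 hφ
  exact this.deriv

/-- `(Dh U)^[j] G` is smooth. -/
lemma contDiff_dh_iter {G U : ℝ × ℝ → ℝ} (hG : ContDiff ℝ (⊤ : ℕ∞) G) (hU : ContDiff ℝ (⊤ : ℕ∞) U)
    (hU0 : ∀ p, U p ≠ 0) (j : ℕ) : ContDiff ℝ (⊤ : ℕ∞) ((Dh U)^[j] G) := by
  induction j with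
  | zero => exact hG
  | succ j ih =>
    rw [Function.iterate_succ_apply']
    exact (hU.inv hU0).mul (contDiff_pd2 ih)

/-- for all `j`, `∂₁[∂₂^j I](x,h) = (D_h^{∘j} G)(x, y(x,h))` on `D`. -/
theorem deriv_iterated_dh_integral (F G U : ℝ × ℝ → ℝ)
    (hF : ContDiff ℝ (⊤ : ℕ∞) F) (hG : ContDiff ℝ (⊤ : ℕ∞) G) (hU : ContDiff ℝ (⊤ : ℕ∞) U)
    (hU0 : ∀ p, U p ≠ 0)
    (D : Set (ℝ × ℝ)) (hD : IsOpen D)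
    (y : ℝ × ℝ → ℝ) (hy : ContDiff ℝ (⊤ : ℕ∞) y)
    (hy1 : ∀ p ∈ D, pd1 y p = F (p.1, y p))
    (hy2 : ∀ p ∈ D, pd2 y p = (U (p.1, y p))⁻¹)
    (I : ℝ × ℝ → ℝ) (hI : ContDiff ℝ (⊤ : ℕ∞) I)
    (hI1 : ∀ p ∈ D, pd1 I p = G (p.1, y p)) :
    ∀ j : ℕ, ∀ p ∈ D, pd1 (pd2^[j] I) p = ((Dh U)^[j] G) (p.1, y p) := by
  intro j
  induction j with
  | zero => simpa using hI1
  | succ j ih =>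
    intro p hp
    set J := pd2^[j] I with hJdef
    set g := (Dh U)^[j] G with hgdef
    have hJ : ContDiff ℝ (⊤ : ℕ∞) J := contDiff_pd2_iter hI j
    have hg : ContDiff ℝ (⊤ : ℕ∞) g := contDiff_dh_iter hG hU hU0 j
    have step1 : pd1 (pd2^[j+1] I) p = pd2 (pd1 J) p := by
      rw [Function.iterate_succ_apply']
      exact pd1_pd2_comm hJ p
    -- local equality near p.2 along the vertical line
    have hev : (fun t => pd1 J (p.1, t)) =ᶠ[nhds p.2]
        (fun t => g ((p.1, t).1, y (p.1, t))) := by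
      have hc : ContinuousAt (fun t : ℝ => (p.1, t)) p.2 := by fun_prop
      have hmem : ∀ᶠ t in nhds p.2, (p.1, t) ∈ D := by
        have : D ∈ nhds ((p.1, p.2) : ℝ × ℝ) := hD.mem_nhds (by simpa using hp)
        exact hc this
      filter_upwards [hmem] with t ht
      exact ih (p.1, t) ht
    have step2 : pd2 (pd1 J) p = pd2 (fun q => g (q.1, y q)) p := by
      unfold pd2
      exact hev.deriv_eq
    have step3 : pd2 (fun q => g (q.1, y q)) p = pd2 g (p.1, y p) * pd2 y p :=
      pd2_comp hg hy p
    rw [step1, step2, step3, hy2 p hp, Function.iterate_succ_apply', Dh]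
    ring
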